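/- arXiv:0912.4388 — 6 statements merged into one kernel-verified Lean document; each statement's English description precedes it below -/
import Mathlib

section
/- Let c > 0 and V ∈ ℝ with |V| < c, and set γ = (1 − V²/c²)^(−1/2). Let E = (E_x, E_y, E_z), B = (B_x, B_y, B_z) ∈ ℝ³, and suppose a ∈ ℝ³ satisfies the relativistic Lorentz equation with unit specific charge for the velocity v = (V, 0, 0), i.e. γ·a = E + v×B − c⁻²·v·(v·E). Define E' ∈ ℝ³ by applying the relativistic acceleration transformation for a particle instantaneously at rest in the boosted frame: E' = (γ³·a_x, γ²·a_y, γ²·a_z). Then E'_x = E_x, E'_y = γ(E_y − V·B_z), and E'_z = γ(E_z + V·B_y). -/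
noncomputable section

abbrev Vec3 : Type := ℝ × ℝ × ℝ

/-- Cross product on `ℝ³`. -/
def cross3 (a b : Vec3) : Vec3 :=
  (a.2.1 * b.2.2 - a.2.2 * b.2.1,
   a.2.2 * b.1 - a.1 * b.2.2,
   a.1 * b.2.1 - a.2.1 * b.1)

/-- Dot product on `ℝ³`. -/
def dot3 (a b : Vec3) : ℝ := a.1 * b.1 + a.2.1 * b.2.1 + a.2.2 * b.2.2

/-- **Transformation of the electric field strength.** If `a` satisfies the
relativistic Lorentz equation with unit specific charge for `v = (V,0,0)` and
`E' = (γ³a_x, γ²a_y, γ²a_z)` is the boosted acceleration of the particle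
instantaneously at rest in the boosted frame, then `E'_x = E_x`,
`E'_y = γ(E_y − V·B_z)` and `E'_z = γ(E_z + V·B_y)`. -/
theorem electric_field_transformation (c V : ℝ) (hc : 0 < c) (hV : |V| < c)
    (γ : ℝ) (hγ : γ = 1 / Real.sqrt (1 - V ^ 2 / c ^ 2))
    (E B a : Vec3)
    (hLor : γ • a =
        E + cross3 ((V, 0, 0) : Vec3) B
          - c⁻¹ ^ 2 • dot3 ((V, 0, 0) : Vec3) E • ((V, 0, 0) : Vec3))
    (E' : Vec3)
    (hE' : E' = (γ ^ 3 * a.1, γ ^ 2 * a.2.1, γ ^ 2 * a.2.2)) :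
    E'.1 = E.1 ∧ E'.2.1 = γ * (E.2.1 - V * B.2.2) ∧ E'.2.2 = γ * (E.2.2 + V * B.2.1) := by
  have hc' : c ≠ 0 := ne_of_gt hc
  have hpos : 0 < 1 - V ^ 2 / c ^ 2 := by
    have h : V ^ 2 < c ^ 2 := sq_lt_sq' (neg_lt_of_abs_lt hV) (lt_of_abs_lt hV)
    have hc2 : 0 < c ^ 2 := by positivity
    rw [sub_pos, div_lt_one hc2]; exact h
  have hsq : Real.sqrt (1 - V ^ 2 / c ^ 2) ^ 2 = 1 - V ^ 2 / c ^ 2 :=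
    Real.sq_sqrt hpos.le
  have hsne : Real.sqrt (1 - V ^ 2 / c ^ 2) ≠ 0 := by positivity
  have hγ2 : γ ^ 2 * (1 - V ^ 2 / c ^ 2) = 1 := by
    rw [hγ, div_pow, one_pow, hsq, one_div]
    exact inv_mul_cancel₀ hpos.ne'
  have h1 := congrArg Prod.fst hLor
  have h2 := congrArg (fun p : Vec3 => p.2.1) hLor
  have h3 := congrArg (fun p : Vec3 => p.2.2) hLor
  simp only [cross3, dot3, Prod.smul_fst, Prod.smul_snd, Prod.fst_add, Prod.snd_add,
    Prod.fst_sub, Prod.snd_sub, smul_eq_mul] at h1 h2 h3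
  subst hE'
  refine ⟨?_, ?_, ?_⟩
  · have : γ ^ 3 * a.1 = γ ^ 2 * (γ * a.1) := by ring
    rw [this, h1]
    have : γ ^ 2 * (E.1 + (0 * B.2.2 - 0 * B.2.1) - c⁻¹ ^ 2 * ((V * E.1 + 0 * E.2.1 + 0 * E.2.2) * V))
        = γ ^ 2 * (1 - V ^ 2 / c ^ 2) * E.1 := by
      field_simp; ring
    rw [this, hγ2, one_mul]
  · have : γ ^ 2 * a.2.1 = γ * (γ * a.2.1) := by ring
    rw [this, h2]; ring
  · have : γ ^ 2 * a.2.2 = γ * (γ * a.2.2) := by ring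
    rw [this, h3]; ring
end
end

section
/- Let c > 0 and V, w ∈ ℝ with |V| < c and |w| < c, and set γ = (1 − V²/c²)^(−1/2). Let v = (V, 0, γ⁻¹w). Then |v| < c, and if E = (E_x, E_y, E_z), B = (B_x, B_y, B_z) ∈ ℝ³, π ∈ ℝ, and a ∈ ℝ³ satisfies the relativistic Lorentz equation γ(v)·a = π·(E + v×B − c⁻²·v·(v·E)), then the y-component of the acceleration is a_y = π·√(1 − (V² + w²γ⁻²)/c²)·(E_y + w·γ⁻¹·B_x − V·B_z). -/
noncomputable section

/-- For the velocity `v = (V, 0, γ⁻¹w)` one has `|v| < c`, and the y-component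
of the acceleration of a particle obeying the relativistic Lorentz equation is
`a_y = π·√(1 − (V² + w²γ⁻²)/c²)·(E_y + wγ⁻¹B_x − V·B_z)`. -/
theorem y_acceleration_of_perturbed_particle (c V w : ℝ) (hc : 0 < c)
    (hV : |V| < c) (hw : |w| < c)
    (γ : ℝ) (hγ : γ = 1 / Real.sqrt (1 - V ^ 2 / c ^ 2)) :
    Real.sqrt (V ^ 2 + 0 ^ 2 + (γ⁻¹ * w) ^ 2) < c ∧
      ∀ (E B a : Vec3) (π : ℝ),
        (1 / Real.sqrt (1 - (V ^ 2 + 0 ^ 2 + (γ⁻¹ * w) ^ 2) / c ^ 2)) • a =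
            π • (E + cross3 ((V, 0, γ⁻¹ * w) : Vec3) B
              - c⁻¹ ^ 2 • dot3 ((V, 0, γ⁻¹ * w) : Vec3) E • ((V, 0, γ⁻¹ * w) : Vec3)) →
          a.2.1 = π * Real.sqrt (1 - (V ^ 2 + w ^ 2 * γ⁻¹ ^ 2) / c ^ 2)
            * (E.2.1 + w * γ⁻¹ * B.1 - V * B.2.2) := by
  have hc2 : (0:ℝ) < c ^ 2 := by positivity
  have hV2 : V ^ 2 < c ^ 2 := by nlinarith [sq_abs V, abs_nonneg V]
  have hw2 : w ^ 2 < c ^ 2 := by nlinarith [sq_abs w, abs_nonneg w]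
  have h1 : (0:ℝ) < 1 - V ^ 2 / c ^ 2 := by
    rw [sub_pos, div_lt_one hc2]; exact hV2
  have hginv : γ⁻¹ = Real.sqrt (1 - V ^ 2 / c ^ 2) := by
    rw [hγ, one_div, inv_inv]
  have hg2 : γ⁻¹ ^ 2 = 1 - V ^ 2 / c ^ 2 := by
    rw [hginv, Real.sq_sqrt h1.le]
  -- the speed squared
  have hs : V ^ 2 + 0 ^ 2 + (γ⁻¹ * w) ^ 2 = V ^ 2 + (1 - V ^ 2 / c ^ 2) * w ^ 2 := by
    rw [mul_pow, hg2]; ring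
  have hsc : V ^ 2 + 0 ^ 2 + (γ⁻¹ * w) ^ 2 < c ^ 2 := by
    rw [hs]
    have key : c ^ 2 - (V ^ 2 + (1 - V ^ 2 / c ^ 2) * w ^ 2)
        = (c ^ 2 - V ^ 2) * (c ^ 2 - w ^ 2) / c ^ 2 := by
      field_simp; ring
    have hk : 0 < (c ^ 2 - V ^ 2) * (c ^ 2 - w ^ 2) / c ^ 2 :=
      div_pos (mul_pos (sub_pos.mpr hV2) (sub_pos.mpr hw2)) hc2
    rw [← key] at hk; linarith
  have hslt : Real.sqrt (V ^ 2 + 0 ^ 2 + (γ⁻¹ * w) ^ 2) < c := by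
    rw [show c = Real.sqrt (c ^ 2) by rw [Real.sqrt_sq hc.le]]
    exact Real.sqrt_lt_sqrt (by positivity) hsc
  refine ⟨hslt, ?_⟩
  intro E B a π heq
  have hpos : (0:ℝ) < 1 - (V ^ 2 + 0 ^ 2 + (γ⁻¹ * w) ^ 2) / c ^ 2 := by
    rw [sub_pos, div_lt_one hc2]; exact hsc
  set s : ℝ := Real.sqrt (1 - (V ^ 2 + 0 ^ 2 + (γ⁻¹ * w) ^ 2) / c ^ 2) with hsdef
  have hspos : 0 < s := Real.sqrt_pos.mpr hpos
  have hy := congrArg (fun p : Vec3 => p.2.1) heq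
  simp only [Prod.smul_snd, Prod.smul_fst, Prod.snd_add, Prod.fst_add, Prod.snd_sub,
    Prod.fst_sub, cross3, dot3, smul_eq_mul] at hy
  have hs2 : Real.sqrt (1 - (V ^ 2 + w ^ 2 * γ⁻¹ ^ 2) / c ^ 2) = s := by
    rw [hsdef]; ring_nf
  rw [hs2]
  have hay : a.2.1 = s * (π * (E.2.1 + (γ⁻¹ * w * B.1 - V * B.2.2) - c⁻¹ ^ 2 *
      ((V * E.1 + 0 * E.2.1 + γ⁻¹ * w * E.2.2) * 0))) := by
    field_simp at hy ⊢
    linarith [hy]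
  rw [hay]; ring
end
end

section
/- Let c > 0 and V ∈ ℝ with |V| < c, set γ = (1 − V²/c²)^(−1/2), and let E_y, B_x, B_z ∈ ℝ. Define f : (−c, c) → ℝ by f(w) = γ²·√(1 − (V² + w²γ⁻²)/c²)·(E_y + w·γ⁻¹·B_x − V·B_z). Then for every w ∈ (−c, c) one has γ²·√(1 − (V² + w²γ⁻²)/c²) = γ·√(1 − w²/c²), the function f is differentiable at 0, and f'(0) = B_x. -/
noncomputable section

/-- The Lorentz-transformed y-acceleration
`f(w) = γ²·√(1 − (V² + w²γ⁻²)/c²)·(E_y + wγ⁻¹B_x − V·B_z)` satisfies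
`γ²·√(1 − (V² + w²γ⁻²)/c²) = γ·√(1 − w²/c²)` on `(−c, c)`, is differentiable
at `0`, and `f'(0) = B_x`. -/
theorem derivative_of_boosted_acceleration (c V : ℝ) (hc : 0 < c) (hV : |V| < c)
    (γ : ℝ) (hγ : γ = 1 / Real.sqrt (1 - V ^ 2 / c ^ 2))
    (Ey Bx Bz : ℝ) (f : ℝ → ℝ)
    (hf : ∀ w, f w = γ ^ 2 * Real.sqrt (1 - (V ^ 2 + w ^ 2 * γ⁻¹ ^ 2) / c ^ 2)
        * (Ey + w * γ⁻¹ * Bx - V * Bz)) :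
    (∀ w ∈ Set.Ioo (-c) c,
        γ ^ 2 * Real.sqrt (1 - (V ^ 2 + w ^ 2 * γ⁻¹ ^ 2) / c ^ 2)
          = γ * Real.sqrt (1 - w ^ 2 / c ^ 2)) ∧
      DifferentiableAt ℝ f 0 ∧ deriv f 0 = Bx := by
  have hc2 : (0:ℝ) < c ^ 2 := by positivity
  have hA : 0 < 1 - V ^ 2 / c ^ 2 := by
    rw [sub_pos, div_lt_one hc2]
    exact sq_lt_sq' (neg_lt_of_abs_lt hV) (lt_of_abs_lt hV)
  have hsA : 0 < Real.sqrt (1 - V ^ 2 / c ^ 2) := Real.sqrt_pos.mpr hA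
  have hγpos : 0 < γ := by rw [hγ]; positivity
  have hγinv : γ⁻¹ = Real.sqrt (1 - V ^ 2 / c ^ 2) := by
    rw [hγ]; field_simp
  have hγA : γ * Real.sqrt (1 - V ^ 2 / c ^ 2) = 1 := by
    rw [← hγinv]; field_simp
  have key : ∀ w : ℝ, γ ^ 2 * Real.sqrt (1 - (V ^ 2 + w ^ 2 * γ⁻¹ ^ 2) / c ^ 2)
      = γ * Real.sqrt (1 - w ^ 2 / c ^ 2) := by
    intro w
    have h1 : 1 - (V ^ 2 + w ^ 2 * γ⁻¹ ^ 2) / c ^ 2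
        = (1 - V ^ 2 / c ^ 2) * (1 - w ^ 2 / c ^ 2) := by
      rw [hγinv, Real.sq_sqrt hA.le]; field_simp; ring
    rw [h1, Real.sqrt_mul hA.le,
      show γ ^ 2 * (Real.sqrt (1 - V ^ 2 / c ^ 2) * Real.sqrt (1 - w ^ 2 / c ^ 2))
        = (γ * Real.sqrt (1 - V ^ 2 / c ^ 2)) * (γ * Real.sqrt (1 - w ^ 2 / c ^ 2)) from by ring,
      hγA, one_mul]
  have hderiv : HasDerivAt f Bx 0 := by
    have hfg : f = fun w => γ * Real.sqrt (1 - w ^ 2 / c ^ 2) * (Ey + w * γ⁻¹ * Bx - V * Bz) := by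
      funext w; rw [hf w, key w]
    rw [hfg]
    have h1 : HasDerivAt (fun w : ℝ => 1 - w ^ 2 / c ^ 2) 0 0 := by
      have := ((hasDerivAt_pow 2 (0:ℝ)).div_const (c ^ 2)).const_sub 1
      simpa using this
    have h2 : HasDerivAt (fun w : ℝ => Real.sqrt (1 - w ^ 2 / c ^ 2)) 0 0 := by
      have := h1.sqrt (by norm_num : (1:ℝ) - 0 ^ 2 / c ^ 2 ≠ 0)
      simpa using this
    have h3 : HasDerivAt (fun w : ℝ => γ * Real.sqrt (1 - w ^ 2 / c ^ 2)) 0 0 := by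
      simpa using h2.const_mul γ
    have h4 : HasDerivAt (fun w : ℝ => Ey + w * γ⁻¹ * Bx - V * Bz) (γ⁻¹ * Bx) 0 := by
      have : HasDerivAt (fun w : ℝ => w * (γ⁻¹ * Bx)) (γ⁻¹ * Bx) 0 := by
        simpa using (hasDerivAt_id (0:ℝ)).mul_const (γ⁻¹ * Bx)
      have h := (this.const_add Ey).sub_const (V * Bz)
      rw [show (fun w : ℝ => Ey + w * γ⁻¹ * Bx - V * Bz) = fun x => Ey + x * (γ⁻¹ * Bx) - V * Bz from by funext w; ring]
      exact h
    have h5 := h3.mul h4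
    have h6 : γ * (γ⁻¹ * Bx) = Bx := by
      rw [← mul_assoc, mul_inv_cancel₀ hγpos.ne', one_mul]
    simpa [h6, Pi.mul_def] using h5
  exact ⟨fun w _ => key w, hderiv.differentiableAt, hderiv.deriv⟩
end
end

section
/- Let c > 0 and V ∈ ℝ with |V| < c, and set γ = (1 − V²/c²)^(−1/2). Let E, B : ℝ³ × ℝ → ℝ³ be continuously differentiable, and define the boosted fields E', B' : ℝ³ × ℝ → ℝ³ by E'(x', y', z', t') = (E_x, γ(E_y − V·B_z), γ(E_z + V·B_y)) and B'(x', y', z', t') = (B_x, γ(B_y + c⁻²V·E_z), γ(B_z − c⁻²V·E_y)), where all unprimed fields on the right-hand sides are evaluated at (x, y, z, t) = (γ(x' + Vt'), y', z', γ(t' + c⁻²Vx')). Define ρ = ∇·E and j = c²·(∇×B) − ∂ₜE, and likewise ρ' = ∇·E' and j' = c²·(∇×B') − ∂ₜE' in the primed coordinates. Then for every (x', y', z', t'), writing (x, y, z, t) = (γ(x' + Vt'), y', z', γ(t' + c⁻²Vx')), one has: ρ'(x',y',z',t') = γ(ρ(x,y,z,t) − c⁻²V·j_x(x,y,z,t)),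 j'_x(x',y',z',t') = γ(j_x(x,y,z,t) − V·ρ(x,y,z,t)), j'_y(x',y',z',t') = j_y(x,y,z,t), and j'_z(x',y',z',t') = j_z(x,y,z,t). -/
noncomputable section

abbrev Pt4 : Type := ℝ × ℝ × ℝ × ℝ

/-- Partial derivative with respect to the first spatial variable `x`. -/
def pdx (f : Pt4 → ℝ) (p : Pt4) : ℝ := deriv (fun u => f (u, p.2.1, p.2.2.1, p.2.2.2)) p.1

/-- Partial derivative with respect to the second spatial variable `y`. -/
def pdy (f : Pt4 → ℝ) (p : Pt4) : ℝ := deriv (fun u => f (p.1, u, p.2.2.1, p.2.2.2)) p.2.1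

/-- Partial derivative with respect to the third spatial variable `z`. -/
def pdz (f : Pt4 → ℝ) (p : Pt4) : ℝ := deriv (fun u => f (p.1, p.2.1, u, p.2.2.2)) p.2.2.1

/-- Partial derivative with respect to the time variable `t`. -/
def pdt (f : Pt4 → ℝ) (p : Pt4) : ℝ := deriv (fun u => f (p.1, p.2.1, p.2.2.1, u)) p.2.2.2

def comp1 (F : Pt4 → Vec3) : Pt4 → ℝ := fun p => (F p).1
def comp2 (F : Pt4 → Vec3) : Pt4 → ℝ := fun p => (F p).2.1
def comp3 (F : Pt4 → Vec3) : Pt4 → ℝ := fun p => (F p).2.2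

/-- Spatial divergence of a time-dependent vector field. -/
def vdiv (F : Pt4 → Vec3) (p : Pt4) : ℝ :=
  pdx (comp1 F) p + pdy (comp2 F) p + pdz (comp3 F) p

/-- Spatial curl of a time-dependent vector field. -/
def vcurl (F : Pt4 → Vec3) (p : Pt4) : Vec3 :=
  (pdy (comp3 F) p - pdz (comp2 F) p,
   pdz (comp1 F) p - pdx (comp3 F) p,
   pdx (comp2 F) p - pdy (comp1 F) p)

/-- Time derivative of a time-dependent vector field. -/
def vdt (F : Pt4 → Vec3) (p : Pt4) : Vec3 :=
  (pdt (comp1 F) p, pdt (comp2 F) p, pdt (comp3 F) p)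

/-- The Lorentz factor `γ = (1 − V²/c²)^(−1/2)`. -/
def lorγ (c V : ℝ) : ℝ := 1 / Real.sqrt (1 - V ^ 2 / c ^ 2)

/-- The inverse of the standard Lorentz transformation with velocity `V` along
the `x`-axis: `(x',y',z',t') ↦ (γ(x'+Vt'), y', z', γ(t'+c⁻²Vx'))`. -/
def Linv (c V : ℝ) (p : Pt4) : Pt4 :=
  (lorγ c V * (p.1 + V * p.2.2.2), p.2.1, p.2.2.1,
   lorγ c V * (p.2.2.2 + c⁻¹ ^ 2 * V * p.1))

/-- The boosted electric field
`E' = (E_x, γ(E_y − V·B_z), γ(E_z + V·B_y))`, the unprimed fields being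
evaluated at the inverse-Lorentz-transformed point. -/
def Eboost (c V : ℝ) (E B : Pt4 → Vec3) (p : Pt4) : Vec3 :=
  ((E (Linv c V p)).1,
   lorγ c V * ((E (Linv c V p)).2.1 - V * (B (Linv c V p)).2.2),
   lorγ c V * ((E (Linv c V p)).2.2 + V * (B (Linv c V p)).2.1))

/-- The boosted magnetic field
`B' = (B_x, γ(B_y + c⁻²V·E_z), γ(B_z − c⁻²V·E_y))`, the unprimed fields being
evaluated at the inverse-Lorentz-transformed point. -/
def Bboost (c V : ℝ) (E B : Pt4 → Vec3) (p : Pt4) : Vec3 :=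
  ((B (Linv c V p)).1,
   lorγ c V * ((B (Linv c V p)).2.1 + c⁻¹ ^ 2 * V * (E (Linv c V p)).2.2),
   lorγ c V * ((B (Linv c V p)).2.2 - c⁻¹ ^ 2 * V * (E (Linv c V p)).2.1))

/-- Basis vectors of `Pt4`. -/
def vex : Pt4 := (1, 0, 0, 0)
def vey : Pt4 := (0, 1, 0, 0)
def vez : Pt4 := (0, 0, 1, 0)
def vet : Pt4 := (0, 0, 0, 1)

lemma deriv_comp_curve {f : Pt4 → ℝ} (hf : Differentiable ℝ f) {g : ℝ → Pt4} {g' : Pt4} {u : ℝ}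
    (hg : HasDerivAt g g' u) : deriv (fun s => f (g s)) u = fderiv ℝ f (g u) g' :=
  ((hf (g u)).hasFDerivAt.comp_hasDerivAt u hg).deriv

lemma fderiv_lincomb_apply (a b : ℝ) {F G : Pt4 → ℝ} (hF : Differentiable ℝ F)
    (hG : Differentiable ℝ G) (q v : Pt4) :
    fderiv ℝ (fun s => a * F s + b * G s) q v = a * fderiv ℝ F q v + b * fderiv ℝ G q v := by
  rw [HasFDerivAt.fderiv (f := fun s => a * F s + b * G s)
    (((hF q).hasFDerivAt.const_mul a).add ((hG q).hasFDerivAt.const_mul b))]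
  simp

lemma pdx_fderiv {f : Pt4 → ℝ} (hf : Differentiable ℝ f) (p : Pt4) :
    pdx f p = fderiv ℝ f p vex := by
  have hg : HasDerivAt (fun u : ℝ => ((u, p.2.1, p.2.2.1, p.2.2.2) : Pt4)) vex p.1 :=
    (hasDerivAt_id _).prodMk ((hasDerivAt_const _ _).prodMk
      ((hasDerivAt_const _ _).prodMk (hasDerivAt_const _ _)))
  simpa [pdx] using deriv_comp_curve hf hg

lemma pdy_fderiv {f : Pt4 → ℝ} (hf : Differentiable ℝ f) (p : Pt4) :
    pdy f p = fderiv ℝ f p vey := by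
  have hg : HasDerivAt (fun u : ℝ => ((p.1, u, p.2.2.1, p.2.2.2) : Pt4)) vey p.2.1 :=
    (hasDerivAt_const _ _).prodMk ((hasDerivAt_id _).prodMk
      ((hasDerivAt_const _ _).prodMk (hasDerivAt_const _ _)))
  simpa [pdy] using deriv_comp_curve hf hg

lemma pdz_fderiv {f : Pt4 → ℝ} (hf : Differentiable ℝ f) (p : Pt4) :
    pdz f p = fderiv ℝ f p vez := by
  have hg : HasDerivAt (fun u : ℝ => ((p.1, p.2.1, u, p.2.2.2) : Pt4)) vez p.2.2.1 :=
    (hasDerivAt_const _ _).prodMk ((hasDerivAt_const _ _).prodMk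
      ((hasDerivAt_id _).prodMk (hasDerivAt_const _ _)))
  simpa [pdz] using deriv_comp_curve hf hg

lemma pdt_fderiv {f : Pt4 → ℝ} (hf : Differentiable ℝ f) (p : Pt4) :
    pdt f p = fderiv ℝ f p vet := by
  have hg : HasDerivAt (fun u : ℝ => ((p.1, p.2.1, p.2.2.1, u) : Pt4)) vet p.2.2.2 :=
    (hasDerivAt_const _ _).prodMk ((hasDerivAt_const _ _).prodMk
      ((hasDerivAt_const _ _).prodMk (hasDerivAt_id _)))
  simpa [pdt] using deriv_comp_curve hf hg

lemma pdx_linv {c V : ℝ} {f : Pt4 → ℝ} (hf : Differentiable ℝ f) (p : Pt4) :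
    pdx (f ∘ Linv c V) p
      = lorγ c V * fderiv ℝ f (Linv c V p) vex
        + lorγ c V * (c⁻¹ ^ 2 * V) * fderiv ℝ f (Linv c V p) vet := by
  have hg : HasDerivAt (fun u : ℝ => Linv c V (u, p.2.1, p.2.2.1, p.2.2.2))
      ((lorγ c V, 0, 0, lorγ c V * (c⁻¹ ^ 2 * V)) : Pt4) p.1 := by
    simp only [Linv]
    refine HasDerivAt.prodMk ?_ (HasDerivAt.prodMk (hasDerivAt_const _ _)
      (HasDerivAt.prodMk (hasDerivAt_const _ _) ?_))
    · simpa using ((hasDerivAt_id p.1).add_const (V * p.2.2.2)).const_mul (lorγ c V)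
    · simpa using (((hasDerivAt_id p.1).const_mul ((c ^ 2)⁻¹ * V)).const_add p.2.2.2).const_mul
        (lorγ c V)
  have hv : ((lorγ c V, 0, 0, lorγ c V * (c⁻¹ ^ 2 * V)) : Pt4)
      = lorγ c V • vex + (lorγ c V * (c⁻¹ ^ 2 * V)) • vet := by
    simp [vex, vet, Prod.ext_iff]
  have h := deriv_comp_curve hf hg
  have hpt : Linv c V (p.1, p.2.1, p.2.2.1, p.2.2.2) = Linv c V p := rfl
  simp only [pdx, Function.comp]
  rw [h, hpt, hv, map_add, map_smul, map_smul, smul_eq_mul, smul_eq_mul]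

lemma pdt_linv {c V : ℝ} {f : Pt4 → ℝ} (hf : Differentiable ℝ f) (p : Pt4) :
    pdt (f ∘ Linv c V) p
      = lorγ c V * V * fderiv ℝ f (Linv c V p) vex
        + lorγ c V * fderiv ℝ f (Linv c V p) vet := by
  have hg : HasDerivAt (fun u : ℝ => Linv c V (p.1, p.2.1, p.2.2.1, u))
      ((lorγ c V * V, 0, 0, lorγ c V) : Pt4) p.2.2.2 := by
    simp only [Linv]
    refine HasDerivAt.prodMk ?_ (HasDerivAt.prodMk (hasDerivAt_const _ _)
      (HasDerivAt.prodMk (hasDerivAt_const _ _) ?_))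
    · simpa [mul_assoc] using (((hasDerivAt_id p.2.2.2).const_mul V).const_add p.1).const_mul
        (lorγ c V)
    · simpa using ((hasDerivAt_id p.2.2.2).add_const ((c ^ 2)⁻¹ * V * p.1)).const_mul (lorγ c V)
  have hv : ((lorγ c V * V, 0, 0, lorγ c V) : Pt4)
      = (lorγ c V * V) • vex + lorγ c V • vet := by
    simp [vex, vet, Prod.ext_iff]
  have h := deriv_comp_curve hf hg
  have hpt : Linv c V (p.1, p.2.1, p.2.2.1, p.2.2.2) = Linv c V p := rfl
  simp only [pdt, Function.comp]
  rw [h, hpt, hv, map_add, map_smul, map_smul, smul_eq_mul, smul_eq_mul]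

lemma pdy_linv {c V : ℝ} {f : Pt4 → ℝ} (hf : Differentiable ℝ f) (p : Pt4) :
    pdy (f ∘ Linv c V) p = fderiv ℝ f (Linv c V p) vey := by
  have hg : HasDerivAt (fun u : ℝ => Linv c V (p.1, u, p.2.2.1, p.2.2.2)) vey p.2.1 := by
    simp only [Linv]
    exact (hasDerivAt_const _ _).prodMk ((hasDerivAt_id _).prodMk
      ((hasDerivAt_const _ _).prodMk (hasDerivAt_const _ _)))
  have h := deriv_comp_curve hf hg
  have hpt : Linv c V (p.1, p.2.1, p.2.2.1, p.2.2.2) = Linv c V p := rfl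
  simp only [pdy, Function.comp]
  rw [h, hpt]

lemma pdz_linv {c V : ℝ} {f : Pt4 → ℝ} (hf : Differentiable ℝ f) (p : Pt4) :
    pdz (f ∘ Linv c V) p = fderiv ℝ f (Linv c V p) vez := by
  have hg : HasDerivAt (fun u : ℝ => Linv c V (p.1, p.2.1, u, p.2.2.2)) vez p.2.2.1 := by
    simp only [Linv]
    exact (hasDerivAt_const _ _).prodMk ((hasDerivAt_const _ _).prodMk
      ((hasDerivAt_id _).prodMk (hasDerivAt_const _ _)))
  have h := deriv_comp_curve hf hg
  have hpt : Linv c V (p.1, p.2.1, p.2.2.1, p.2.2.2) = Linv c V p := rfl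
  simp only [pdz, Function.comp]
  rw [h, hpt]

/-- **Transformation of the source densities.** With `ρ = ∇·E`,
`j = c²∇×B − ∂ₜE` and likewise for the boosted fields in the primed
coordinates, one has `ρ' = γ(ρ − c⁻²V·j_x)`, `j'_x = γ(j_x − V·ρ)`,
`j'_y = j_y` and `j'_z = j_z`. -/
theorem source_density_transformation (c V : ℝ) (hc : 0 < c) (hV : |V| < c)
    (E B : Pt4 → Vec3) (hE : ContDiff ℝ 1 E) (hB : ContDiff ℝ 1 B) :
    ∀ p : Pt4,
      vdiv (Eboost c V E B) p
          = lorγ c V * (vdiv E (Linv c V p)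
              - c⁻¹ ^ 2 * V * ((c ^ 2) • vcurl B (Linv c V p) - vdt E (Linv c V p)).1) ∧
      ((c ^ 2) • vcurl (Bboost c V E B) p - vdt (Eboost c V E B) p).1
          = lorγ c V * (((c ^ 2) • vcurl B (Linv c V p) - vdt E (Linv c V p)).1
              - V * vdiv E (Linv c V p)) ∧
      ((c ^ 2) • vcurl (Bboost c V E B) p - vdt (Eboost c V E B) p).2.1
          = ((c ^ 2) • vcurl B (Linv c V p) - vdt E (Linv c V p)).2.1 ∧
      ((c ^ 2) • vcurl (Bboost c V E B) p - vdt (Eboost c V E B) p).2.2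
          = ((c ^ 2) • vcurl B (Linv c V p) - vdt E (Linv c V p)).2.2 := by
  intro p
  have hc' : c ≠ 0 := ne_of_gt hc
  have hEd : Differentiable ℝ E := hE.differentiable one_ne_zero
  have hBd : Differentiable ℝ B := hB.differentiable one_ne_zero
  have hE1 : Differentiable ℝ (comp1 E) := hEd.fst
  have hE2 : Differentiable ℝ (comp2 E) := hEd.snd.fst
  have hE3 : Differentiable ℝ (comp3 E) := hEd.snd.snd
  have hB1 : Differentiable ℝ (comp1 B) := hBd.fst
  have hB2 : Differentiable ℝ (comp2 B) := hBd.snd.fst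
  have hB3 : Differentiable ℝ (comp3 B) := hBd.snd.snd
  -- the six boosted component functions as compositions with `Linv`
  have he1 : comp1 (Eboost c V E B) = comp1 E ∘ Linv c V := rfl
  have he2 : comp2 (Eboost c V E B)
      = (fun s => lorγ c V * comp2 E s + -(lorγ c V * V) * comp3 B s) ∘ Linv c V := by
    funext r; simp only [comp2, comp3, Eboost, Function.comp]; ring
  have he3 : comp3 (Eboost c V E B)
      = (fun s => lorγ c V * comp3 E s + (lorγ c V * V) * comp2 B s) ∘ Linv c V := by
    funext r; simp only [comp3, comp2, Eboost, Function.comp]; ring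
  have hb1 : comp1 (Bboost c V E B) = comp1 B ∘ Linv c V := rfl
  have hb2 : comp2 (Bboost c V E B)
      = (fun s => lorγ c V * comp2 B s + (lorγ c V * (c⁻¹ ^ 2 * V)) * comp3 E s) ∘ Linv c V := by
    funext r; simp only [comp2, comp3, Bboost, Function.comp]; ring
  have hb3 : comp3 (Bboost c V E B)
      = (fun s => lorγ c V * comp3 B s + -(lorγ c V * (c⁻¹ ^ 2 * V)) * comp2 E s) ∘ Linv c V := by
    funext r; simp only [comp3, comp2, Bboost, Function.comp]; ring
  have hf2 : Differentiable ℝ (fun s => lorγ c V * comp2 E s + -(lorγ c V * V) * comp3 B s) :=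
    (hE2.const_mul _).add (hB3.const_mul _)
  have hf3 : Differentiable ℝ (fun s => lorγ c V * comp3 E s + (lorγ c V * V) * comp2 B s) :=
    (hE3.const_mul _).add (hB2.const_mul _)
  have hg2 : Differentiable ℝ
      (fun s => lorγ c V * comp2 B s + (lorγ c V * (c⁻¹ ^ 2 * V)) * comp3 E s) :=
    (hB2.const_mul _).add (hE3.const_mul _)
  have hg3 : Differentiable ℝ
      (fun s => lorγ c V * comp3 B s + -(lorγ c V * (c⁻¹ ^ 2 * V)) * comp2 E s) :=
    (hB3.const_mul _).add (hE2.const_mul _)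
  have hsq : (0:ℝ) < 1 - V ^ 2 / c ^ 2 := by
    have h1 : V ^ 2 < c ^ 2 := by nlinarith [abs_lt.mp hV, abs_nonneg V, le_abs_self V, neg_abs_le V]
    have : V ^ 2 / c ^ 2 < 1 := by
      rw [div_lt_one (by positivity)]; exact h1
    linarith
  have hγsq : lorγ c V ^ 2 = 1 / (1 - V ^ 2 / c ^ 2) := by
    rw [lorγ, div_pow, one_pow, Real.sq_sqrt hsq.le]
  have hcv : c ^ 2 - V ^ 2 ≠ 0 := by
    have h1 : V ^ 2 < c ^ 2 := by nlinarith [abs_lt.mp hV]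
    linarith
  have hγ2 : lorγ c V ^ 2 * (c ^ 2 - V ^ 2) = c ^ 2 := by
    rw [hγsq]; field_simp
  refine ⟨?_, ?_, ?_, ?_⟩
  · simp only [vdiv, vcurl, vdt, Prod.smul_mk, Prod.mk_sub_mk, smul_eq_mul]
    rw [he1, he2, he3, pdx_linv hE1 p, pdy_linv hf2 p, pdz_linv hf3 p,
      fderiv_lincomb_apply _ _ hE2 hB3, fderiv_lincomb_apply _ _ hE3 hB2,
      pdx_fderiv hE1, pdy_fderiv hE2, pdz_fderiv hE3,
      pdy_fderiv hB3, pdz_fderiv hB2, pdt_fderiv hE1]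
    field_simp
    ring
  · simp only [vdiv, vcurl, vdt, Prod.smul_mk, Prod.mk_sub_mk, smul_eq_mul]
    rw [he1, hb2, hb3, pdt_linv hE1 p, pdy_linv hg3 p, pdz_linv hg2 p,
      fderiv_lincomb_apply _ _ hB3 hE2, fderiv_lincomb_apply _ _ hB2 hE3,
      pdx_fderiv hE1, pdy_fderiv hE2, pdz_fderiv hE3,
      pdy_fderiv hB3, pdz_fderiv hB2, pdt_fderiv hE1]
    field_simp
    ring
  · simp only [vdiv, vcurl, vdt, Prod.smul_mk, Prod.mk_sub_mk, smul_eq_mul]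
    rw [hb1, hb3, he2, pdz_linv hB1 p, pdx_linv hg3 p, pdt_linv hf2 p,
      fderiv_lincomb_apply _ _ hB3 hE2, fderiv_lincomb_apply _ _ hB3 hE2,
      fderiv_lincomb_apply _ _ hE2 hB3, fderiv_lincomb_apply _ _ hE2 hB3,
      pdz_fderiv hB1, pdx_fderiv hB3, pdt_fderiv hE2]
    have hki : c ^ 2 * c⁻¹ ^ 2 = 1 := by field_simp
    linear_combination
      (-(fderiv ℝ (comp3 B) (Linv c V p) vex)
          - c⁻¹ ^ 2 * fderiv ℝ (comp2 E) (Linv c V p) vet) * hγ2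
        + ((lorγ c V) ^ 2 * V * (fderiv ℝ (comp2 E) (Linv c V p) vex
              - fderiv ℝ (comp3 B) (Linv c V p) vet)
            + ((lorγ c V) ^ 2 * V ^ 2 * c⁻¹ ^ 2 + (lorγ c V) ^ 2 - 1)
              * fderiv ℝ (comp2 E) (Linv c V p) vet) * hki
  · simp only [vdiv, vcurl, vdt, Prod.smul_mk, Prod.mk_sub_mk, smul_eq_mul]
    rw [hb1, hb2, he3, pdy_linv hB1 p, pdx_linv hg2 p, pdt_linv hf3 p,
      fderiv_lincomb_apply _ _ hB2 hE3, fderiv_lincomb_apply _ _ hB2 hE3,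
      fderiv_lincomb_apply _ _ hE3 hB2, fderiv_lincomb_apply _ _ hE3 hB2,
      pdy_fderiv hB1, pdx_fderiv hB2, pdt_fderiv hE3]
    have hki : c ^ 2 * c⁻¹ ^ 2 = 1 := by field_simp
    linear_combination
      (fderiv ℝ (comp2 B) (Linv c V p) vex
          - c⁻¹ ^ 2 * fderiv ℝ (comp3 E) (Linv c V p) vet) * hγ2
        + ((lorγ c V) ^ 2 * V * (fderiv ℝ (comp3 E) (Linv c V p) vex
              + fderiv ℝ (comp2 B) (Linv c V p) vet)
            + ((lorγ c V) ^ 2 * V ^ 2 * c⁻¹ ^ 2 + (lorγ c V) ^ 2 - 1)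
              * fderiv ℝ (comp3 E) (Linv c V p) vet) * hki
end
end

section
/- Let c > 0 and V, w ∈ ℝ with |V| < c and |w| < c, set γ = (1 − V²/c²)^(−1/2) and γ(w) = (1 − w²/c²)^(−1/2). Let E = (E_x, E_y, E_z), B = (B_x, B_y, B_z) ∈ ℝ³ and π ∈ ℝ. Let v = (V, 0, γ⁻¹w) and suppose a ∈ ℝ³ satisfies the relativistic Lorentz equation γ(v)·a = π·(E + v×B − c⁻²·v·(v·E)). Define the boosted field components E'_y = γ(E_y − V·B_z) and B'_x = B_x, and the boosted acceleration component a'_y = γ²·a_y. Then γ(w)·a'_y = π·(E'_y + w·B'_x); that is, the y-component of the relativistic Lorentz equation holds in the boosted frame for the boosted velocity v' = (0, 0, w). -/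
noncomputable section

/-- **The y-component of the Lorentz equation holds in the boosted frame.**
If `a` satisfies the relativistic Lorentz equation for the velocity
`v = (V, 0, γ⁻¹w)`, then with `E'_y = γ(E_y − V·B_z)`, `B'_x = B_x` and
`a'_y = γ²·a_y` one has `γ(w)·a'_y = π·(E'_y + w·B'_x)`. -/
theorem boosted_lorentz_equation_y (c V w : ℝ) (hc : 0 < c)
    (hV : |V| < c) (hw : |w| < c)
    (γ γw : ℝ) (hγ : γ = 1 / Real.sqrt (1 - V ^ 2 / c ^ 2))
    (hγw : γw = 1 / Real.sqrt (1 - w ^ 2 / c ^ 2))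
    (E B a : Vec3) (π : ℝ)
    (hLor : (1 / Real.sqrt (1 - (V ^ 2 + 0 ^ 2 + (γ⁻¹ * w) ^ 2) / c ^ 2)) • a =
        π • (E + cross3 ((V, 0, γ⁻¹ * w) : Vec3) B
          - c⁻¹ ^ 2 • dot3 ((V, 0, γ⁻¹ * w) : Vec3) E • ((V, 0, γ⁻¹ * w) : Vec3))) :
    γw * (γ ^ 2 * a.2.1) = π * (γ * (E.2.1 - V * B.2.2) + w * B.1) := by
  have hc2 : (0:ℝ) < c ^ 2 := by positivity
  obtain ⟨hV1, hV2⟩ := abs_lt.mp hV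
  obtain ⟨hw1, hw2⟩ := abs_lt.mp hw
  have hVc : V ^ 2 < c ^ 2 := by nlinarith
  have hwc : w ^ 2 < c ^ 2 := by nlinarith
  have h1 : (0:ℝ) < 1 - V ^ 2 / c ^ 2 := by
    rw [sub_pos, div_lt_one hc2]; exact hVc
  have h2 : (0:ℝ) < 1 - w ^ 2 / c ^ 2 := by
    rw [sub_pos, div_lt_one hc2]; exact hwc
  have hs1 : 0 < Real.sqrt (1 - V ^ 2 / c ^ 2) := Real.sqrt_pos.mpr h1
  have hs2 : 0 < Real.sqrt (1 - w ^ 2 / c ^ 2) := Real.sqrt_pos.mpr h2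
  have hγpos : 0 < γ := by rw [hγ]; positivity
  have hγinv : γ⁻¹ = Real.sqrt (1 - V ^ 2 / c ^ 2) := by
    rw [hγ, one_div, inv_inv]
  have hγinv2 : γ⁻¹ ^ 2 = 1 - V ^ 2 / c ^ 2 := by
    rw [hγinv, Real.sq_sqrt h1.le]
  have hkey : 1 - (V ^ 2 + 0 ^ 2 + (γ⁻¹ * w) ^ 2) / c ^ 2
      = (1 - V ^ 2 / c ^ 2) * (1 - w ^ 2 / c ^ 2) := by
    rw [mul_pow, hγinv2]
    field_simp
    ring
  have hsq : Real.sqrt (1 - (V ^ 2 + 0 ^ 2 + (γ⁻¹ * w) ^ 2) / c ^ 2)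
      = Real.sqrt (1 - V ^ 2 / c ^ 2) * Real.sqrt (1 - w ^ 2 / c ^ 2) := by
    rw [hkey, Real.sqrt_mul h1.le]
  obtain ⟨ax, ay, az⟩ := a
  obtain ⟨ex, ey, ez⟩ := E
  obtain ⟨bx, by', bz⟩ := B
  simp only [cross3, dot3, Prod.smul_mk, Prod.mk_add_mk, Prod.mk_sub_mk, smul_eq_mul,
    Prod.mk.injEq] at hLor
  obtain ⟨-, hy, -⟩ := hLor
  rw [hsq] at hy
  -- hy : (1/(s1*s2)) * ay = π * (...)
  have hγs : γ * Real.sqrt (1 - V ^ 2 / c ^ 2) = 1 := by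
    rw [hγ, one_div, inv_mul_cancel₀ hs1.ne']
  have hγws : γw * Real.sqrt (1 - w ^ 2 / c ^ 2) = 1 := by
    rw [hγw, one_div, inv_mul_cancel₀ hs2.ne']
  have hγγinv : γ * γ⁻¹ = 1 := mul_inv_cancel₀ (ne_of_gt hγpos)
  have hone : (1 / (Real.sqrt (1 - V ^ 2 / c ^ 2) * Real.sqrt (1 - w ^ 2 / c ^ 2)))
      = γ * γw := by
    rw [hγ, hγw]; field_simp
  rw [hone] at hy
  -- hy : γ * γw * ay = π * (ey + (γ⁻¹*w*bx - V*bz) - c⁻¹^2 * dot * 0)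
  linear_combination γ * hy + π * w * bx * hγγinv
end
end

section
/- For a real 3×3 matrix A define the curl vector curlvec(A) = (A₃₂ − A₂₃, A₁₃ − A₃₁, A₂₁ − A₁₂). Let M and N be invertible real 3×3 matrices, and let v = (v₁, v₂, v₃) ∈ ℝ³ with v₃ ≠ 0 satisfy N·v = curlvec(M). For λ ∈ ℝ let J_λ be the matrix obtained from M by replacing the entry M₁₂ with M₁₂ + λ and the entry M₁₃ with M₁₃ − λ·v₂/v₃, all other entries unchanged. Then: (i) J_λ·v = M·v and trace(J_λ) = trace(M) for every λ; (ii) curlvec(J_λ) = curlvec(M) + (0, −λ·v₂/v₃, −λ), so curlvec(J_λ) ≠ curlvec(M) whenever λ ≠ 0; (iii) there exists λ₀ > 0 such that for every λ with 0 < |λ| < λ₀ the matrix J_λ is invertible and there is no vector u ∈ ℝ³ satisfying both J_λ·u = M·v and N·u = curlvec(J_λ). -/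
noncomputable section

/-- The "curl vector" of a 3×3 matrix:
`curlvec(A) = (A₃₂ − A₂₃, A₁₃ − A₃₁, A₂₁ − A₁₂)` (0-indexed below). -/
def curlvec (A : Matrix (Fin 3) (Fin 3) ℝ) : Fin 3 → ℝ :=
  ![A 2 1 - A 1 2, A 0 2 - A 2 0, A 1 0 - A 0 1]

/-- The perturbed matrix `J_λ`: the entry `M₁₂` is replaced by `M₁₂ + λ` and
the entry `M₁₃` by `M₁₃ − λ·v₂/v₃` (0-indexed: entries `(0,1)` and `(0,2)`). -/
def Jmat (M : Matrix (Fin 3) (Fin 3) ℝ) (v : Fin 3 → ℝ) (l : ℝ) :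
    Matrix (Fin 3) (Fin 3) ℝ :=
  Matrix.of fun i j =>
    if i = 0 ∧ j = 1 then M 0 1 + l
    else if i = 0 ∧ j = 2 then M 0 2 - l * (v 1 / v 2)
    else M i j

lemma Jmat_mulVec (M : Matrix (Fin 3) (Fin 3) ℝ) (v : Fin 3 → ℝ) (hv : v 2 ≠ 0) (l : ℝ) :
    (Jmat M v l).mulVec v = M.mulVec v := by
  funext i
  fin_cases i <;>
    simp [Jmat, Matrix.mulVec, dotProduct, Fin.sum_univ_three] <;> field_simp <;> ring

lemma Jmat_curlvec (M : Matrix (Fin 3) (Fin 3) ℝ) (v : Fin 3 → ℝ) (l : ℝ) :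
    curlvec (Jmat M v l) = curlvec M + ![0, -l * (v 1 / v 2), -l] := by
  funext i
  fin_cases i <;> simp [Jmat, curlvec] <;> ring

lemma Jmat_det (M : Matrix (Fin 3) (Fin 3) ℝ) (v : Fin 3 → ℝ) (l : ℝ) :
    (Jmat M v l).det = M.det + l * ((Jmat M v 1).det - M.det) := by
  simp [Jmat, Matrix.det_fin_three]; ring

/-- **Algebraic core of the no-local-velocity theorem.** -/
theorem no_local_velocity_algebraic_core
    (M N : Matrix (Fin 3) (Fin 3) ℝ) (hM : IsUnit M.det) (hN : IsUnit N.det)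
    (v : Fin 3 → ℝ) (hv : v 2 ≠ 0) (hNv : N.mulVec v = curlvec M) :
    (∀ l : ℝ, (Jmat M v l).mulVec v = M.mulVec v ∧
        (Jmat M v l).trace = M.trace) ∧
      (∀ l : ℝ,
        curlvec (Jmat M v l) = curlvec M + ![0, -l * (v 1 / v 2), -l] ∧
          (l ≠ 0 → curlvec (Jmat M v l) ≠ curlvec M)) ∧
      (∃ l₀ : ℝ, 0 < l₀ ∧ ∀ l : ℝ, 0 < |l| → |l| < l₀ →
        IsUnit (Jmat M v l).det ∧
          ¬∃ u : Fin 3 → ℝ,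
            (Jmat M v l).mulVec u = M.mulVec v ∧
              N.mulVec u = curlvec (Jmat M v l)) := by
  have hcurl_ne : ∀ l : ℝ, l ≠ 0 → curlvec (Jmat M v l) ≠ curlvec M := by
    intro l hl h
    have h2 := congrFun h 2
    rw [Jmat_curlvec] at h2
    simp at h2
    exact hl h2
  refine ⟨fun l => ⟨Jmat_mulVec M v hv l, by simp [Jmat, Matrix.trace_fin_three]⟩,
    fun l => ⟨Jmat_curlvec M v l, hcurl_ne l⟩, ?_⟩
  have hMdet : M.det ≠ 0 := hM.ne_zero
  set a : ℝ := (Jmat M v 1).det - M.det with ha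
  refine ⟨|M.det| / (|a| + 1), by positivity, fun l hl hll => ?_⟩
  have habs : |l * a| < |M.det| := by
    rw [abs_mul]
    calc |l| * |a| ≤ |l| * (|a| + 1) := by nlinarith [abs_nonneg l]
    _ < |M.det| / (|a| + 1) * (|a| + 1) := by
        apply mul_lt_mul_of_pos_right hll; positivity
    _ = |M.det| := by field_simp
  have hJdet : (Jmat M v l).det ≠ 0 := by
    rw [Jmat_det M v l, ← ha]
    intro h
    have : l * a = -M.det := by linarith
    rw [this, abs_neg] at habs
    exact absurd habs (lt_irrefl _)
  refine ⟨isUnit_iff_ne_zero.mpr hJdet, ?_⟩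
  rintro ⟨u, hu1, hu2⟩
  have huv : u = v := by
    have hinj := Matrix.mulVec_injective_iff_isUnit.mpr ((Matrix.isUnit_iff_isUnit_det _).mpr (isUnit_iff_ne_zero.mpr hJdet))
    exact hinj (by rw [hu1, ← Jmat_mulVec M v hv l])
  subst huv
  exact hcurl_ne l (abs_pos.mp hl) (by rw [← hu2, hNv])
end
end
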